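/- (Lemma: joint recursion for Ξ, ℰ, 𝒟) Define t = 2β²p/(1−β²) + 4 and A = 648/(1 − p/t − 2β²/(1+β²)) (so t ≥ 4 and A > 0). Under the lower-bound, mixing, smoothness, and bounded-variance assumptions, if η ≤ p/(8L√(324 + 2Aβ²/(1−β²))), then for every r ≥ 0: Ξ^{(r+1)} + (36/p²)η² ℰ^{(r+1)} + (Aβ²/p³)η² 𝒟^{(r+1)} ≤ (1 − p/t)(Ξ^{(r)} + (36/p²)η² ℰ^{(r)} + (Aβ²/p³)η² 𝒟^{(r)}) + (1/p)η² E‖∇f(x̄^{(r)})‖² + (1/(Np))(9 + 864/p²)η² E‖U^{(r+1)} − D^{(r+1)}‖_F² + (L²/p³)(2592β² + 16Aβ⁴/(1−β²))η⁴ E‖ū^{(r)}‖² + (9/(Np))η² E‖E^{(r+1)}‖_F² + σ²η²/p. -/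

import Mathlib

open MeasureTheory
open scoped BigOperators

noncomputable section

/-- Problem data and standing assumptions (lower bound, mixing, smoothness) for
decentralized optimization over `N` nodes in `ℝ^d`. -/
structure MTProblem (N d : ℕ) (Ω : Type) [mΩ : MeasurableSpace Ω] where
  /-- Probability measure driving the stochastic gradients. -/
  μ : Measure Ω
  prob : IsProbabilityMeasure μ
  fstar : ℝ
  L : ℝ
  σ : ℝ
  p : ℝ
  β : ℝ
  /-- Local objectives `f_i`. -/
  f : Fin N → EuclideanSpace ℝ (Fin d) → ℝ
  /-- Local gradients `∇f_i`. -/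
  g : Fin N → EuclideanSpace ℝ (Fin d) → EuclideanSpace ℝ (Fin d)
  /-- Mixing matrix. -/
  W : Fin N → Fin N → ℝ
  /-- Common initial parameter. -/
  x0 : EuclideanSpace ℝ (Fin d)
  hN : 0 < N
  hβ0 : 0 ≤ β
  hβ1 : β < 1
  hL : 0 < L
  hp0 : 0 < p
  hp1 : p ≤ 1
  hgrad : ∀ i v, HasGradientAt (f i) (g i v) v
  /-- Lower bound: `f⋆ ≤ f(x)` for all `x`. -/
  hlb : ∀ v, fstar ≤ (N : ℝ)⁻¹ * ∑ i, f i v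
  /-- `L`-smoothness of each `f_i`. -/
  hsmooth : ∀ i v w, ‖g i v - g i w‖ ≤ L * ‖v - w‖
  hWsymm : ∀ i j, W i j = W j i
  hWrow : ∀ i, ∑ j, W i j = 1
  hWcol : ∀ j, ∑ i, W i j = 1
  /-- Spectral gap: `‖XW − X̄‖_F² ≤ (1−p)‖X − X̄‖_F²`. -/
  hmix : ∀ X : Fin N → EuclideanSpace ℝ (Fin d),
    ∑ j, ‖(∑ i, W i j • X i) - (N : ℝ)⁻¹ • ∑ i, X i‖ ^ 2
      ≤ (1 - p) * ∑ j, ‖X j - (N : ℝ)⁻¹ • ∑ i, X i‖ ^ 2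

namespace MTProblem

variable {N d : ℕ} {Ω : Type} [mΩ : MeasurableSpace Ω]

/-- Global objective `f = (1/N) ∑_i f_i`. -/
def F (P : MTProblem N d Ω) (v : EuclideanSpace ℝ (Fin d)) : ℝ :=
  (N : ℝ)⁻¹ * ∑ i, P.f i v

/-- Gradient of the global objective, `∇f = (1/N) ∑_i ∇f_i`. -/
def gradF (P : MTProblem N d Ω) (v : EuclideanSpace ℝ (Fin d)) : EuclideanSpace ℝ (Fin d) :=
  (N : ℝ)⁻¹ • ∑ i, P.g i v

end MTProblem

/-- A run of the Momentum Tracking algorithm: trajectories `x, u, c`, realized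
stochastic gradients `G r i = ∇F_i(x_i^{(r)}; ξ_i^{(r)})`, together with the update
rules, the standard initialization, and the stochastic-gradient assumptions
(unbiasedness, bounded variance, independence across nodes and rounds in the form
of orthogonality of the noises). -/
structure MTRun {N d : ℕ} {Ω : Type} [mΩ : MeasurableSpace Ω] (P : MTProblem N d Ω) where
  /-- Step size. -/
  η : ℝ
  hη : 0 < η
  x : ℕ → Fin N → Ω → EuclideanSpace ℝ (Fin d)
  u : ℕ → Fin N → Ω → EuclideanSpace ℝ (Fin d)
  c : ℕ → Fin N → Ω → EuclideanSpace ℝ (Fin d)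
  G : ℕ → Fin N → Ω → EuclideanSpace ℝ (Fin d)
  /-- Filtration of the information available at each round. -/
  ℱ : MeasureTheory.Filtration ℕ mΩ
  hx0 : ∀ i, x 0 i = fun _ => P.x0
  hu0 : ∀ i ω, u 0 i ω = (1 - P.β)⁻¹ • (G 0 i ω - (N : ℝ)⁻¹ • ∑ j, G 0 j ω)
  hc0 : ∀ i, c 0 i = u 0 i
  hu : ∀ r i ω, u (r + 1) i ω = P.β • u r i ω + G r i ω
  hx : ∀ r i ω, x (r + 1) i ω
      = (∑ j, P.W i j • x r j ω) - η • (u (r + 1) i ω - c r i ω)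
  hc : ∀ r i ω, c (r + 1) i ω
      = (∑ j, P.W i j • (c r j ω - u (r + 1) j ω)) + u (r + 1) i ω
  hmeas : ∀ r i, MemLp (G r i) 2 P.μ
  hadapted_x : ∀ r i, StronglyMeasurable[ℱ r] (x r i)
  hadapted_G : ∀ r i, StronglyMeasurable[ℱ (r + 1)] (G r i)
  /-- Unbiasedness: `E[∇F_i(x_i^{(r)};ξ) | ℱ_r] = ∇f_i(x_i^{(r)})`. -/
  hunbiased : ∀ r i,
    MeasureTheory.condExp (ℱ r) P.μ (G r i) =ᵐ[P.μ] fun ω => P.g i (x r i ω)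
  /-- Bounded variance. -/
  hvar : ∀ r i, ∫ ω, ‖G r i ω - P.g i (x r i ω)‖ ^ 2 ∂P.μ ≤ P.σ ^ 2
  /-- Independence across nodes and rounds (orthogonality of the noises). -/
  horth : ∀ r s : ℕ, ∀ i j : Fin N, (r, i) ≠ (s, j) →
    ∫ ω, (inner ℝ (G r i ω - P.g i (x r i ω)) (G s j ω - P.g j (x s j ω)) : ℝ) ∂P.μ = 0

namespace MTRun

variable {N d : ℕ} {Ω : Type} [mΩ : MeasurableSpace Ω] {P : MTProblem N d Ω}

/-- Node-average of the parameters, `x̄^{(r)}`. -/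
def xbar (S : MTRun P) (r : ℕ) (ω : Ω) : EuclideanSpace ℝ (Fin d) :=
  (N : ℝ)⁻¹ • ∑ i, S.x r i ω

/-- Node-average of the momenta, `ū^{(r)}`. -/
def ubar (S : MTRun P) (r : ℕ) (ω : Ω) : EuclideanSpace ℝ (Fin d) :=
  (N : ℝ)⁻¹ • ∑ i, S.u r i ω

/-- Node-average of the correction variables, `c̄^{(r)}`. -/
def cbar (S : MTRun P) (r : ℕ) (ω : Ω) : EuclideanSpace ℝ (Fin d) :=
  (N : ℝ)⁻¹ • ∑ i, S.c r i ω

/-- Auxiliary average `z̄^{(r)}`. -/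
def zbar (S : MTRun P) : ℕ → Ω → EuclideanSpace ℝ (Fin d)
  | 0 => S.xbar 0
  | r + 1 => fun ω =>
      (1 - P.β)⁻¹ • S.xbar (r + 1) ω - (P.β * (1 - P.β)⁻¹) • S.xbar r ω

/-- Auxiliary sequence `d_i^{(r)}`. -/
def dseq (S : MTRun P) : ℕ → Fin N → Ω → EuclideanSpace ℝ (Fin d)
  | 0 => fun i ω => (1 - P.β)⁻¹ • (P.g i (S.xbar 0 ω) - P.gradF (S.xbar 0 ω))
  | r + 1 => fun i ω => P.β • dseq S r i ω + P.g i (S.xbar r ω)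

/-- Auxiliary sequence `e_i^{(r)}`. -/
def eseq (S : MTRun P) : ℕ → Fin N → Ω → EuclideanSpace ℝ (Fin d)
  | 0 => fun _ _ => 0
  | r + 1 => fun i ω => P.β • eseq S r i ω + P.gradF (S.xbar r ω)

/-- Node-average `d̄^{(r)}`. -/
def dbar (S : MTRun P) (r : ℕ) (ω : Ω) : EuclideanSpace ℝ (Fin d) :=
  (N : ℝ)⁻¹ • ∑ i, S.dseq r i ω

/-- Node-average `ē^{(r)}`. -/
def ebar (S : MTRun P) (r : ℕ) (ω : Ω) : EuclideanSpace ℝ (Fin d) :=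
  (N : ℝ)⁻¹ • ∑ i, S.eseq r i ω

/-- Consensus distance `Ξ^{(r)} = (1/N) E‖X^{(r)} − X̄^{(r)}‖_F²`. -/
def Xi (S : MTRun P) (r : ℕ) : ℝ :=
  (N : ℝ)⁻¹ * ∫ ω, (∑ i, ‖S.x r i ω - S.xbar r ω‖ ^ 2) ∂P.μ

/-- Tracking error `ℰ^{(r)} = (1/N) E‖D^{(r+1)} − C^{(r)} − E^{(r+1)}‖_F²`. -/
def EE (S : MTRun P) (r : ℕ) : ℝ :=
  (N : ℝ)⁻¹ *
    ∫ ω, (∑ i, ‖S.dseq (r + 1) i ω - S.c r i ω - S.eseq (r + 1) i ω‖ ^ 2) ∂P.μ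

/-- Momentum drift `𝒟^{(r)} = (1/N) E‖D^{(r+1)} − D^{(r)} − E^{(r+1)} + E^{(r)}‖_F²`. -/
def DD (S : MTRun P) (r : ℕ) : ℝ :=
  (N : ℝ)⁻¹ *
    ∫ ω, (∑ i,
      ‖S.dseq (r + 1) i ω - S.dseq r i ω - S.eseq (r + 1) i ω + S.eseq r i ω‖ ^ 2) ∂P.μ

end MTRun

/-!
Both the consensus error `X − X̄` and the tracking error `D − C − E` evolve as `X ↦ XW + Y` with
`X` centred, so the spectral gap together with Young's inequality (parameter `p/2`) contracts
them by `1 − p/2` at the price of `(3/p)‖Y‖²`. The drift `𝒟` contracts by `2β²/(1+β²)` up to the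
change of the gradients at the averaged iterate, which smoothness bounds by `L²η²‖ū^{(r+1)}‖²`;
the momentum recursion and the orthogonality of the gradient noises bound `E‖ū^{(r+1)}‖²` in
turn. Adding the three recursions with weights `1`, `36η²/p²`, `Aβ²η²/p³`, the step-size condition
makes each coefficient on the right at most `1 − p/t` times the one on the left; `A` is chosen
exactly so that this closes for the `𝒟`-coefficient.
-/

section Young

variable {E : Type*} [SeminormedAddCommGroup E]

theorem add_sq_le_of_pos {τ : ℝ} (hτ : 0 < τ) (x y : ℝ) :
    (x + y) ^ 2 ≤ (1 + τ) * x ^ 2 + (1 + τ⁻¹) * y ^ 2 := by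
  have key : (1 + τ) * x ^ 2 + (1 + τ⁻¹) * y ^ 2 - (x + y) ^ 2 = τ⁻¹ * (τ * x - y) ^ 2 := by
    field_simp
    ring
  nlinarith [mul_nonneg (inv_nonneg.2 hτ.le) (sq_nonneg (τ * x - y))]

theorem norm_add_sq_le_of_pos {τ : ℝ} (hτ : 0 < τ) (a b : E) :
    ‖a + b‖ ^ 2 ≤ (1 + τ) * ‖a‖ ^ 2 + (1 + τ⁻¹) * ‖b‖ ^ 2 :=
  (pow_le_pow_left₀ (norm_nonneg _) (norm_add_le a b) 2).trans (add_sq_le_of_pos hτ _ _)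

theorem norm_add_sq_le_two_mul (a b : E) : ‖a + b‖ ^ 2 ≤ 2 * ‖a‖ ^ 2 + 2 * ‖b‖ ^ 2 := by
  simpa [one_add_one_eq_two] using norm_add_sq_le_of_pos one_pos a b

theorem norm_add_add_sq_le (a b c : E) :
    ‖a + b + c‖ ^ 2 ≤ 3 * ‖a‖ ^ 2 + 3 * ‖b‖ ^ 2 + 3 * ‖c‖ ^ 2 := by
  have h := norm_add_sq_le_of_pos (by norm_num : (0 : ℝ) < 1 / 2) (a + b) c
  have hab := norm_add_sq_le_two_mul a b
  norm_num at h
  linarith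

theorem norm_smul_add_sq_le [NormedSpace ℝ E] {β : ℝ} (hβ0 : 0 ≤ β) (hβ1 : β < 1) (a b : E) :
    ‖β • a + b‖ ^ 2 ≤ 2 * β ^ 2 / (1 + β ^ 2) * ‖a‖ ^ 2 + 2 / (1 - β ^ 2) * ‖b‖ ^ 2 := by
  have hβ2 : 0 < 1 - β ^ 2 := by nlinarith
  have h := norm_add_sq_le_of_pos (div_pos hβ2 (by positivity : 0 < 1 + β ^ 2)) (β • a) b
  rw [norm_smul, Real.norm_of_nonneg hβ0] at h
  convert h using 2 <;> field_simp <;> ring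

theorem sum_norm_add_sq_le_of_pos {ι : Type*} (s : Finset ι) {τ : ℝ} (hτ : 0 < τ) (a b : ι → E) :
    ∑ i ∈ s, ‖a i + b i‖ ^ 2 ≤ (1 + τ) * ∑ i ∈ s, ‖a i‖ ^ 2 + (1 + τ⁻¹) * ∑ i ∈ s, ‖b i‖ ^ 2 := by
  rw [Finset.mul_sum, Finset.mul_sum, ← Finset.sum_add_distrib]
  exact Finset.sum_le_sum fun i _ => norm_add_sq_le_of_pos hτ (a i) (b i)

end Young

section Averages

theorem sum_norm_sub_sq_le_of_sum_eq {E : Type*} [NormedAddCommGroup E] [InnerProductSpace ℝ E]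
    {ι : Type*} (s : Finset ι) (a : ι → E) {v : E} (hv : ∑ i ∈ s, a i = (s.card : ℝ) • v) :
    ∑ i ∈ s, ‖a i - v‖ ^ 2 ≤ ∑ i ∈ s, ‖a i‖ ^ 2 := by
  have expand : ∑ i ∈ s, ‖a i - v‖ ^ 2
      = ∑ i ∈ s, ‖a i‖ ^ 2 - 2 * inner ℝ (∑ i ∈ s, a i) v + s.card * ‖v‖ ^ 2 := by
    simp only [norm_sub_sq_real, Finset.sum_add_distrib, Finset.sum_sub_distrib, ← Finset.mul_sum,
      sum_inner, Finset.sum_const, nsmul_eq_mul]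
  rw [expand, hv, real_inner_smul_left, real_inner_self_eq_norm_sq]
  nlinarith [sq_nonneg ‖v‖, Nat.cast_nonneg (α := ℝ) s.card]

theorem norm_sum_sq_le_card_mul {E : Type*} [SeminormedAddCommGroup E] {ι : Type*} (s : Finset ι)
    (a : ι → E) : ‖∑ i ∈ s, a i‖ ^ 2 ≤ s.card * ∑ i ∈ s, ‖a i‖ ^ 2 :=
  (pow_le_pow_left₀ (norm_nonneg _) (norm_sum_le _ _) 2).trans (sq_sum_le_card_mul_sum_sq ..)

variable {V : Type*} [AddCommGroup V] [Module ℝ V] {N : ℕ}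

theorem natCast_smul_inv_smul_sum (X : Fin N → V) :
    (N : ℝ) • (N : ℝ)⁻¹ • ∑ i, X i = ∑ i, X i := by
  obtain rfl | hN := eq_or_ne N 0
  · simp
  · exact smul_inv_smul₀ (Nat.cast_ne_zero.2 hN) _

theorem sum_sub_average_eq_zero (X : Fin N → V) : ∑ j, (X j - (N : ℝ)⁻¹ • ∑ i, X i) = 0 := by
  rw [Finset.sum_sub_distrib, Finset.sum_const, Finset.card_univ, Fintype.card_fin,
    ← Nat.cast_smul_eq_nsmul ℝ, natCast_smul_inv_smul_sum, sub_self]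

theorem sum_norm_sub_average_sq_le {E : Type*} [NormedAddCommGroup E] [InnerProductSpace ℝ E]
    (X : Fin N → E) : ∑ j, ‖X j - (N : ℝ)⁻¹ • ∑ i, X i‖ ^ 2 ≤ ∑ j, ‖X j‖ ^ 2 :=
  sum_norm_sub_sq_le_of_sum_eq _ X (by simp [natCast_smul_inv_smul_sum])

end Averages

section Integration

variable {Ω : Type*} [MeasurableSpace Ω] {μ : Measure Ω}

theorem integral_le_sum_mul_integral {ι : Type*} (s : Finset ι) {f : Ω → ℝ} (c : ι → ℝ)
    (F : ι → Ω → ℝ) (hf : ∀ ω, 0 ≤ f ω) (hF : ∀ k ∈ s, Integrable (F k) μ)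
    (hle : ∀ ω, f ω ≤ ∑ k ∈ s, c k * F k ω) :
    ∫ ω, f ω ∂μ ≤ ∑ k ∈ s, c k * ∫ ω, F k ω ∂μ := by
  calc ∫ ω, f ω ∂μ ≤ ∫ ω, ∑ k ∈ s, c k * F k ω ∂μ :=
        integral_mono_of_nonneg (.of_forall hf)
          (integrable_finsetSum _ fun k hk => (hF k hk).const_mul _) (.of_forall hle)
    _ = ∑ k ∈ s, c k * ∫ ω, F k ω ∂μ := by
        rw [integral_finsetSum _ fun k hk => (hF k hk).const_mul _]
        simp only [integral_const_mul]

theorem MeasureTheory.MemLp.integrable_inner {E : Type*} [NormedAddCommGroup E]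
    [InnerProductSpace ℝ E] {f g : Ω → E} (hf : MemLp f 2 μ) (hg : MemLp g 2 μ) :
    Integrable (fun ω => inner ℝ (f ω) (g ω)) μ :=
  (L2.integrable_inner (𝕜 := ℝ) (hf.toLp f) (hg.toLp g)).congr
    (by filter_upwards [hf.coeFn_toLp, hg.coeFn_toLp] with ω h1 h2; rw [h1, h2])

theorem MeasureTheory.MemLp.integrable_norm_sq {E : Type*} [NormedAddCommGroup E] {f : Ω → E}
    (hf : MemLp f 2 μ) :
    Integrable (fun ω => ‖f ω‖ ^ 2) μ :=
  (memLp_two_iff_integrable_sq_norm hf.1).1 hf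

theorem LipschitzWith.memLp_comp {α E F : Type*} [MeasurableSpace α] {μ : Measure α}
    [IsFiniteMeasure μ] [NormedAddCommGroup E] [NormedAddCommGroup F] {K : NNReal} {g : E → F}
    (hg : LipschitzWith K g) {f : α → E} {p : ENNReal} (hf : MemLp f p μ) :
    MemLp (fun x => g (f x)) p μ := by
  convert ((hg.sub (LipschitzWith.const (g 0))).comp_memLp (by simp) hf).add
    (memLp_const (g 0)) using 1
  ext x
  simp

theorem integral_norm_sum_sq_of_orthogonal {Ω E : Type*} [MeasurableSpace Ω] {μ : Measure Ω}
    [NormedAddCommGroup E] [InnerProductSpace ℝ E] {ι : Type*} (s : Finset ι) {f : ι → Ω → E}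
    (hf : ∀ i, MemLp (f i) 2 μ) (horth : ∀ i j, i ≠ j → ∫ ω, inner ℝ (f i ω) (f j ω) ∂μ = 0) :
    ∫ ω, ‖∑ i ∈ s, f i ω‖ ^ 2 ∂μ = ∑ i ∈ s, ∫ ω, ‖f i ω‖ ^ 2 ∂μ := by
  have hint : ∀ i j, Integrable (fun ω => inner ℝ (f i ω) (f j ω)) μ :=
    fun i j => (hf i).integrable_inner (hf j)
  simp_rw [← real_inner_self_eq_norm_sq, sum_inner, inner_sum]
  rw [integral_finsetSum _ fun i _ => integrable_finsetSum _ fun j _ => hint i j]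
  refine Finset.sum_congr rfl fun i hi => ?_
  rw [integral_finsetSum _ fun j _ => hint i j,
    Finset.sum_eq_single_of_mem i hi fun j _ hji => horth i j hji.symm]

end Integration

namespace MTProblem

variable {N d : ℕ} {Ω : Type} [MeasurableSpace Ω] (P : MTProblem N d Ω)

theorem sum_g_eq (v : EuclideanSpace ℝ (Fin d)) : ∑ i, P.g i v = (N : ℝ) • P.gradF v :=
  (natCast_smul_inv_smul_sum _).symm

theorem lipschitzWith_g (i : Fin N) : LipschitzWith (Real.toNNReal P.L) (P.g i) :=
  .of_dist_le' fun v w => by simpa only [dist_eq_norm] using P.hsmooth i v w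

theorem memLp_g_comp (i : Fin N) {v : Ω → EuclideanSpace ℝ (Fin d)} (hv : MemLp v 2 P.μ) :
    MemLp (fun ω => P.g i (v ω)) 2 P.μ :=
  haveI := P.prob
  (P.lipschitzWith_g i).memLp_comp hv

theorem memLp_gradF_comp {v : Ω → EuclideanSpace ℝ (Fin d)} (hv : MemLp v 2 P.μ) :
    MemLp (fun ω => P.gradF (v ω)) 2 P.μ :=
  (memLp_finsetSum _ fun i _ => P.memLp_g_comp i hv).const_smul (N : ℝ)⁻¹

theorem sum_W_smul_const (j : Fin N) (v : EuclideanSpace ℝ (Fin d)) : ∑ i, P.W i j • v = v := by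
  rw [← Finset.sum_smul, P.hWcol j, one_smul]

theorem sum_W_smul_comm (i : Fin N) (X : Fin N → EuclideanSpace ℝ (Fin d)) :
    ∑ j, P.W i j • X j = ∑ j, P.W j i • X j :=
  Finset.sum_congr rfl fun j _ => by rw [P.hWsymm]

theorem sum_W_smul_sub_const (j : Fin N) (X : Fin N → EuclideanSpace ℝ (Fin d))
    (v : EuclideanSpace ℝ (Fin d)) : ∑ i, P.W i j • (X i - v) = ∑ i, P.W i j • X i - v := by
  simp only [smul_sub, Finset.sum_sub_distrib, P.sum_W_smul_const]

theorem sum_norm_mix_sq_le {X : Fin N → EuclideanSpace ℝ (Fin d)} (hX : ∑ i, X i = 0) :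
    ∑ j, ‖∑ i, P.W i j • X i‖ ^ 2 ≤ (1 - P.p) * ∑ j, ‖X j‖ ^ 2 := by
  simpa [hX] using P.hmix X

theorem sum_norm_mix_add_sq_le {X : Fin N → EuclideanSpace ℝ (Fin d)} (hX : ∑ i, X i = 0)
    (Y : Fin N → EuclideanSpace ℝ (Fin d)) :
    ∑ j, ‖∑ i, P.W i j • X i + Y j‖ ^ 2
      ≤ (1 - P.p / 2) * ∑ j, ‖X j‖ ^ 2 + 3 / P.p * ∑ j, ‖Y j‖ ^ 2 := by
  have hp0 := P.hp0
  have hp1 := P.hp1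
  have hcoefX : (1 + P.p / 2) * (1 - P.p) ≤ 1 - P.p / 2 := by nlinarith
  have hcoefY : 1 + (P.p / 2)⁻¹ ≤ 3 / P.p := by
    rw [inv_div, show (3 : ℝ) / P.p = 1 / P.p + 2 / P.p by ring]
    gcongr
    rw [le_div_iff₀ hp0]
    linarith
  calc _ ≤ (1 + P.p / 2) * ∑ j, ‖∑ i, P.W i j • X i‖ ^ 2 + (1 + (P.p / 2)⁻¹) * ∑ j, ‖Y j‖ ^ 2 :=
        sum_norm_add_sq_le_of_pos _ (half_pos hp0) _ Y
    _ ≤ (1 + P.p / 2) * ((1 - P.p) * ∑ j, ‖X j‖ ^ 2) + 3 / P.p * ∑ j, ‖Y j‖ ^ 2 := by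
        gcongr
        exact P.sum_norm_mix_sq_le hX
    _ ≤ _ := by
        rw [← mul_assoc]
        gcongr

theorem sum_norm_mix_sub_sq_le (Y : Fin N → EuclideanSpace ℝ (Fin d)) :
    ∑ j, ‖∑ i, P.W i j • Y i - Y j‖ ^ 2 ≤ 4 * ∑ j, ‖Y j‖ ^ 2 := by
  set Z := fun j => Y j - (N : ℝ)⁻¹ • ∑ i, Y i with hZdef
  have hZ : ∀ j, ∑ i, P.W i j • Y i - Y j = ∑ i, P.W i j • Z i + -Z j := fun j => by
    simp only [hZdef, P.sum_W_smul_sub_const]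
    abel
  have hmix : ∑ j, ‖∑ i, P.W i j • Z i‖ ^ 2 ≤ (1 - P.p) * ∑ j, ‖Z j‖ ^ 2 :=
    P.sum_norm_mix_sq_le (sum_sub_average_eq_zero Y)
  have hcenter : ∑ j, ‖Z j‖ ^ 2 ≤ ∑ j, ‖Y j‖ ^ 2 := sum_norm_sub_average_sq_le Y
  have hZ0 : 0 ≤ ∑ j, ‖Z j‖ ^ 2 := by positivity
  have hp0 := P.hp0
  calc ∑ j, ‖∑ i, P.W i j • Y i - Y j‖ ^ 2
      ≤ ∑ j, (2 * ‖∑ i, P.W i j • Z i‖ ^ 2 + 2 * ‖Z j‖ ^ 2) := by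
        refine Finset.sum_le_sum fun j _ => ?_
        simpa only [hZ, norm_neg] using norm_add_sq_le_two_mul (∑ i, P.W i j • Z i) (-Z j)
    _ ≤ 4 * ∑ j, ‖Y j‖ ^ 2 := by
        rw [Finset.sum_add_distrib, ← Finset.mul_sum, ← Finset.mul_sum]
        nlinarith

theorem norm_avg_g_sq_le (y : Fin N → EuclideanSpace ℝ (Fin d)) (v : EuclideanSpace ℝ (Fin d)) :
    ‖(N : ℝ)⁻¹ • ∑ i, P.g i (y i)‖ ^ 2
      ≤ 2 * ‖P.gradF v‖ ^ 2 + 2 * P.L ^ 2 * ((N : ℝ)⁻¹ * ∑ i, ‖y i - v‖ ^ 2) := by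
  have hsplit : (N : ℝ)⁻¹ • ∑ i, P.g i (y i)
      = P.gradF v + (N : ℝ)⁻¹ • ∑ i, (P.g i (y i) - P.g i v) := by
    rw [MTProblem.gradF, ← smul_add, Finset.sum_sub_distrib, add_sub_cancel]
  have hlip : ∑ i, ‖P.g i (y i) - P.g i v‖ ^ 2 ≤ P.L ^ 2 * ∑ i, ‖y i - v‖ ^ 2 := by
    rw [Finset.mul_sum]
    refine Finset.sum_le_sum fun i _ => ?_
    rw [← mul_pow]
    exact pow_le_pow_left₀ (norm_nonneg _) (P.hsmooth i _ _) 2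
  have hN : (0 : ℝ) < N := Nat.cast_pos.2 P.hN
  have hdev : ‖(N : ℝ)⁻¹ • ∑ i, (P.g i (y i) - P.g i v)‖ ^ 2
      ≤ P.L ^ 2 * ((N : ℝ)⁻¹ * ∑ i, ‖y i - v‖ ^ 2) := by
    rw [norm_smul, mul_pow, Real.norm_of_nonneg (by positivity)]
    calc _ ≤ ((N : ℝ)⁻¹) ^ 2 * (N * (P.L ^ 2 * ∑ i, ‖y i - v‖ ^ 2)) := by
          gcongr
          simpa using (norm_sum_sq_le_card_mul Finset.univ fun i => P.g i (y i) - P.g i v).trans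
            (by rw [Finset.card_univ, Fintype.card_fin]; gcongr)
      _ = _ := by field_simp
  rw [hsplit]
  linarith [norm_add_sq_le_two_mul (P.gradF v) ((N : ℝ)⁻¹ • ∑ i, (P.g i (y i) - P.g i v))]

theorem sum_norm_g_sub_gradF_sq_le (v w : EuclideanSpace ℝ (Fin d)) :
    ∑ i, ‖(P.g i v - P.gradF v) - (P.g i w - P.gradF w)‖ ^ 2 ≤ N * (P.L ^ 2 * ‖v - w‖ ^ 2) :=
  calc _ = ∑ i, ‖(P.g i v - P.g i w) - (P.gradF v - P.gradF w)‖ ^ 2 := by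
        simp only [sub_sub_sub_comm]
    _ ≤ ∑ i, ‖P.g i v - P.g i w‖ ^ 2 := sum_norm_sub_sq_le_of_sum_eq Finset.univ _
        (by simp [Finset.sum_sub_distrib, P.sum_g_eq, smul_sub])
    _ ≤ ∑ _i : Fin N, P.L ^ 2 * ‖v - w‖ ^ 2 := Finset.sum_le_sum fun i _ => by
        rw [← mul_pow]
        exact pow_le_pow_left₀ (norm_nonneg _) (P.hsmooth i v w) 2
    _ = _ := by simp

end MTProblem

namespace MTRun

variable {N d : ℕ} {Ω : Type} [MeasurableSpace Ω] {P : MTProblem N d Ω} (S : MTRun P)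

def trackErr (r : ℕ) (i : Fin N) (ω : Ω) : EuclideanSpace ℝ (Fin d) :=
  S.dseq (r + 1) i ω - S.c r i ω - S.eseq (r + 1) i ω

def drift (r : ℕ) (i : Fin N) (ω : Ω) : EuclideanSpace ℝ (Fin d) :=
  S.dseq (r + 1) i ω - S.dseq r i ω - S.eseq (r + 1) i ω + S.eseq r i ω

def consensusErr (r : ℕ) (i : Fin N) (ω : Ω) : EuclideanSpace ℝ (Fin d) :=
  S.x r i ω - S.xbar r ω

def momentumErr (r : ℕ) (i : Fin N) (ω : Ω) : EuclideanSpace ℝ (Fin d) :=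
  S.u r i ω - S.dseq r i ω

theorem sum_c_eq_zero (r : ℕ) (ω : Ω) : ∑ i, S.c r i ω = 0 := by
  induction r with
  | zero =>
    simp only [S.hc0, S.hu0, ← Finset.smul_sum]
    rw [sum_sub_average_eq_zero (S.G 0 · ω), smul_zero]
  | succ r ih =>
    simp only [S.hc, Finset.sum_add_distrib]
    rw [Finset.sum_comm]
    simp only [← Finset.sum_smul, P.hWcol, one_smul, Finset.sum_sub_distrib, ih]
    abel

theorem sum_dseq_eq_sum_eseq (r : ℕ) (ω : Ω) : ∑ i, S.dseq r i ω = ∑ i, S.eseq r i ω := by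
  induction r with
  | zero =>
    simp [dseq, eseq, ← Finset.smul_sum, Finset.sum_sub_distrib, P.sum_g_eq,
      ← Nat.cast_smul_eq_nsmul ℝ]
  | succ r ih =>
    simp [dseq, eseq, Finset.sum_add_distrib, ← Finset.smul_sum, ih, P.sum_g_eq,
      ← Nat.cast_smul_eq_nsmul ℝ]

theorem eseq_eq_eseq (r : ℕ) (i j : Fin N) (ω : Ω) : S.eseq r i ω = S.eseq r j ω := by
  induction r with
  | zero => rfl
  | succ r ih => simp only [eseq, ih]

theorem sum_trackErr_eq_zero (r : ℕ) (ω : Ω) : ∑ i, S.trackErr r i ω = 0 := by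
  simp only [trackErr, Finset.sum_sub_distrib, S.sum_c_eq_zero, S.sum_dseq_eq_sum_eseq]
  abel

theorem xbar_succ (r : ℕ) (ω : Ω) : S.xbar (r + 1) ω = S.xbar r ω - S.η • S.ubar (r + 1) ω := by
  simp only [xbar, ubar, S.hx, Finset.sum_sub_distrib, ← Finset.smul_sum, S.sum_c_eq_zero,
    sub_zero]
  rw [Finset.sum_comm]
  simp only [← Finset.sum_smul, P.hWcol, one_smul, smul_sub, smul_comm S.η]

theorem ubar_succ (r : ℕ) (ω : Ω) :
    S.ubar (r + 1) ω = P.β • S.ubar r ω + (N : ℝ)⁻¹ • ∑ i, S.G r i ω := by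
  simp only [ubar, S.hu, Finset.sum_add_distrib, ← Finset.smul_sum, smul_add, smul_comm P.β]

theorem sum_consensusErr_eq_zero (r : ℕ) (ω : Ω) : ∑ i, S.consensusErr r i ω = 0 :=
  sum_sub_average_eq_zero (S.x r · ω)

theorem consensusErr_succ (r : ℕ) (i : Fin N) (ω : Ω) :
    S.consensusErr (r + 1) i ω
      = ∑ j, P.W j i • S.consensusErr r j ω
        + (-S.η) • ((S.u (r + 1) i ω - S.c r i ω) - S.ubar (r + 1) ω) := by
  rw [consensusErr, S.hx, S.xbar_succ]
  simp only [consensusErr, P.sum_W_smul_sub_const, P.sum_W_smul_comm i]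
  module

theorem trackErr_succ (r : ℕ) (i : Fin N) (ω : Ω) :
    S.trackErr (r + 1) i ω
      = ∑ j, P.W j i • S.trackErr r j ω
        + ((∑ j, P.W j i • S.momentumErr (r + 1) j ω - S.momentumErr (r + 1) i ω)
          + S.drift (r + 1) i ω) := by
  have hW : ∑ j, P.W j i • S.eseq (r + 1) j ω = S.eseq (r + 1) i ω := by
    simp only [S.eseq_eq_eseq (r + 1) _ i, P.sum_W_smul_const]
  simp only [trackErr, momentumErr, drift, S.hc, P.sum_W_smul_comm i, smul_sub,
    Finset.sum_sub_distrib, hW]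
  abel

theorem drift_succ (r : ℕ) (i : Fin N) (ω : Ω) :
    S.drift (r + 1) i ω
      = P.β • S.drift r i ω + ((P.g i (S.xbar (r + 1) ω) - P.gradF (S.xbar (r + 1) ω))
          - (P.g i (S.xbar r ω) - P.gradF (S.xbar r ω))) := by
  simp only [drift, dseq, eseq]
  module

end MTRun

namespace MTProblem

variable {N d : ℕ} {Ω : Type} [MeasurableSpace Ω] (P : MTProblem N d Ω)

def meanSq (F : Fin N → Ω → EuclideanSpace ℝ (Fin d)) : ℝ :=
  (N : ℝ)⁻¹ * ∫ ω, ∑ i, ‖F i ω‖ ^ 2 ∂P.μ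

theorem meanSq_nonneg (F : Fin N → Ω → EuclideanSpace ℝ (Fin d)) : 0 ≤ P.meanSq F := by
  unfold meanSq
  positivity

theorem meanSq_le {n : ℕ} {F : Fin N → Ω → EuclideanSpace ℝ (Fin d)} (c : Fin n → ℝ)
    (G : Fin n → Fin N → Ω → EuclideanSpace ℝ (Fin d)) (hG : ∀ k i, MemLp (G k i) 2 P.μ)
    (hle : ∀ ω, ∑ i, ‖F i ω‖ ^ 2 ≤ ∑ k, c k * ∑ i, ‖G k i ω‖ ^ 2) :
    P.meanSq F ≤ ∑ k, c k * P.meanSq (G k) := by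
  have hint := integral_le_sum_mul_integral (μ := P.μ) Finset.univ c
    (fun k ω => ∑ i, ‖G k i ω‖ ^ 2) (fun ω => by positivity)
    (fun k _ => integrable_finsetSum _ fun i _ => (hG k i).integrable_norm_sq) hle
  calc P.meanSq F ≤ (N : ℝ)⁻¹ * ∑ k, c k * ∫ ω, ∑ i, ‖G k i ω‖ ^ 2 ∂P.μ := by
        unfold meanSq
        gcongr
    _ = _ := by
        simp only [meanSq, Finset.mul_sum]
        exact Finset.sum_congr rfl fun k _ => by ring

theorem meanSq_const (v : Ω → EuclideanSpace ℝ (Fin d)) :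
    P.meanSq (fun _ => v) = ∫ ω, ‖v ω‖ ^ 2 ∂P.μ := by
  have hN : (N : ℝ) ≠ 0 := Nat.cast_ne_zero.2 P.hN.ne'
  simp [meanSq, integral_const_mul, ← mul_assoc, inv_mul_cancel₀ hN]

end MTProblem

namespace MTRun

variable {N d : ℕ} {Ω : Type} [MeasurableSpace Ω] {P : MTProblem N d Ω} (S : MTRun P)

theorem memLp_x_u_c (r : ℕ) :
    (∀ i, MemLp (S.x r i) 2 P.μ) ∧ (∀ i, MemLp (S.u r i) 2 P.μ) ∧ (∀ i, MemLp (S.c r i) 2 P.μ) := by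
  have := P.prob
  induction r with
  | zero =>
    have hu : ∀ i, MemLp (S.u 0 i) 2 P.μ := fun i => by
      rw [funext (S.hu0 i)]
      exact ((S.hmeas 0 i).sub
        ((memLp_finsetSum _ fun j _ => S.hmeas 0 j).const_smul (N : ℝ)⁻¹)).const_smul (1 - P.β)⁻¹
    exact ⟨fun i => S.hx0 i ▸ memLp_const _, hu, fun i => S.hc0 i ▸ hu i⟩
  | succ r ih =>
    obtain ⟨hx, hu, hc⟩ := ih
    have hu' : ∀ i, MemLp (S.u (r + 1) i) 2 P.μ := fun i => by
      rw [funext (S.hu r i)]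
      exact ((hu i).const_smul P.β).add (S.hmeas r i)
    refine ⟨fun i => ?_, hu', fun i => ?_⟩
    · rw [funext (S.hx r i)]
      exact (memLp_finsetSum _ fun j _ => (hx j).const_smul (P.W i j)).sub
        (((hu' i).sub (hc i)).const_smul S.η)
    · rw [funext (S.hc r i)]
      exact (memLp_finsetSum _ fun j _ => ((hc j).sub (hu' j)).const_smul (P.W i j)).add (hu' i)

theorem memLp_x (r : ℕ) (i : Fin N) : MemLp (S.x r i) 2 P.μ := (S.memLp_x_u_c r).1 i

theorem memLp_u (r : ℕ) (i : Fin N) : MemLp (S.u r i) 2 P.μ := (S.memLp_x_u_c r).2.1 i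

theorem memLp_c (r : ℕ) (i : Fin N) : MemLp (S.c r i) 2 P.μ := (S.memLp_x_u_c r).2.2 i

theorem memLp_xbar (r : ℕ) : MemLp (S.xbar r) 2 P.μ :=
  (memLp_finsetSum _ fun i _ => S.memLp_x r i).const_smul (N : ℝ)⁻¹

theorem memLp_ubar (r : ℕ) : MemLp (S.ubar r) 2 P.μ :=
  (memLp_finsetSum _ fun i _ => S.memLp_u r i).const_smul (N : ℝ)⁻¹

theorem memLp_dseq (r : ℕ) (i : Fin N) : MemLp (S.dseq r i) 2 P.μ := by
  induction r with
  | zero =>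
    exact ((P.memLp_g_comp i (S.memLp_xbar 0)).sub (P.memLp_gradF_comp (S.memLp_xbar 0))).const_smul
      (1 - P.β)⁻¹
  | succ r ih => exact (ih.const_smul P.β).add (P.memLp_g_comp i (S.memLp_xbar r))

theorem memLp_eseq (r : ℕ) (i : Fin N) : MemLp (S.eseq r i) 2 P.μ := by
  have := P.prob
  induction r with
  | zero => exact memLp_const 0
  | succ r ih => exact (ih.const_smul P.β).add (P.memLp_gradF_comp (S.memLp_xbar r))

theorem memLp_consensusErr (r : ℕ) (i : Fin N) : MemLp (S.consensusErr r i) 2 P.μ :=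
  (S.memLp_x r i).sub (S.memLp_xbar r)

theorem memLp_momentumErr (r : ℕ) (i : Fin N) : MemLp (S.momentumErr r i) 2 P.μ :=
  (S.memLp_u r i).sub (S.memLp_dseq r i)

theorem memLp_trackErr (r : ℕ) (i : Fin N) : MemLp (S.trackErr r i) 2 P.μ :=
  ((S.memLp_dseq (r + 1) i).sub (S.memLp_c r i)).sub (S.memLp_eseq (r + 1) i)

theorem memLp_drift (r : ℕ) (i : Fin N) : MemLp (S.drift r i) 2 P.μ :=
  (((S.memLp_dseq (r + 1) i).sub (S.memLp_dseq r i)).sub (S.memLp_eseq (r + 1) i)).add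
    (S.memLp_eseq r i)

theorem sum_norm_consensusErr_succ_sq_le (r : ℕ) (ω : Ω) :
    ∑ i, ‖S.consensusErr (r + 1) i ω‖ ^ 2
      ≤ (1 - P.p / 2) * ∑ i, ‖S.consensusErr r i ω‖ ^ 2
        + 9 / P.p * S.η ^ 2 * ∑ i, ‖S.momentumErr (r + 1) i ω‖ ^ 2
        + 9 / P.p * S.η ^ 2 * ∑ i, ‖S.trackErr r i ω‖ ^ 2
        + 9 / P.p * S.η ^ 2 * ∑ i, ‖S.eseq (r + 1) i ω‖ ^ 2 := by
  set v := fun i => S.u (r + 1) i ω - S.c r i ω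
  have hv : ∑ i, v i = (N : ℝ) • S.ubar (r + 1) ω := by
    simp only [v, Finset.sum_sub_distrib, S.sum_c_eq_zero, sub_zero, ubar,
      natCast_smul_inv_smul_sum]
  have hcenter : ∑ i, ‖v i - S.ubar (r + 1) ω‖ ^ 2 ≤ ∑ i, ‖v i‖ ^ 2 :=
    sum_norm_sub_sq_le_of_sum_eq _ v (by simpa using hv)
  have hsplit : ∑ i, ‖v i‖ ^ 2 ≤ 3 * ∑ i, ‖S.momentumErr (r + 1) i ω‖ ^ 2
      + 3 * ∑ i, ‖S.trackErr r i ω‖ ^ 2 + 3 * ∑ i, ‖S.eseq (r + 1) i ω‖ ^ 2 := by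
    simp only [Finset.mul_sum, ← Finset.sum_add_distrib]
    refine Finset.sum_le_sum fun i _ => ?_
    have : v i = S.momentumErr (r + 1) i ω + S.trackErr r i ω + S.eseq (r + 1) i ω := by
      simp only [v, momentumErr, trackErr]
      abel
    rw [this]
    exact norm_add_add_sq_le _ _ _
  have hp0 := P.hp0
  calc ∑ i, ‖S.consensusErr (r + 1) i ω‖ ^ 2
      = ∑ i, ‖∑ j, P.W j i • S.consensusErr r j ω
          + (-S.η) • (v i - S.ubar (r + 1) ω)‖ ^ 2 := by
        simp only [S.consensusErr_succ, v]
    _ ≤ (1 - P.p / 2) * ∑ i, ‖S.consensusErr r i ω‖ ^ 2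
          + 3 / P.p * ∑ i, ‖(-S.η) • (v i - S.ubar (r + 1) ω)‖ ^ 2 :=
        P.sum_norm_mix_add_sq_le (S.sum_consensusErr_eq_zero r ω) _
    _ = (1 - P.p / 2) * ∑ i, ‖S.consensusErr r i ω‖ ^ 2
          + 3 / P.p * (S.η ^ 2 * ∑ i, ‖v i - S.ubar (r + 1) ω‖ ^ 2) := by
        simp only [norm_smul, mul_pow, Real.norm_eq_abs, sq_abs, abs_neg, Finset.mul_sum]
    _ ≤ (1 - P.p / 2) * ∑ i, ‖S.consensusErr r i ω‖ ^ 2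
          + 3 / P.p * (S.η ^ 2 * (3 * ∑ i, ‖S.momentumErr (r + 1) i ω‖ ^ 2
            + 3 * ∑ i, ‖S.trackErr r i ω‖ ^ 2 + 3 * ∑ i, ‖S.eseq (r + 1) i ω‖ ^ 2)) := by
        gcongr
        exact hcenter.trans hsplit
    _ = _ := by ring

theorem sum_norm_trackErr_succ_sq_le (r : ℕ) (ω : Ω) :
    ∑ i, ‖S.trackErr (r + 1) i ω‖ ^ 2
      ≤ (1 - P.p / 2) * ∑ i, ‖S.trackErr r i ω‖ ^ 2
        + 24 / P.p * ∑ i, ‖S.momentumErr (r + 1) i ω‖ ^ 2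
        + 6 / P.p * ∑ i, ‖S.drift (r + 1) i ω‖ ^ 2 := by
  set Y := fun i => ∑ j, P.W j i • S.momentumErr (r + 1) j ω - S.momentumErr (r + 1) i ω
  have hY : ∑ i, ‖Y i + S.drift (r + 1) i ω‖ ^ 2
      ≤ 8 * ∑ i, ‖S.momentumErr (r + 1) i ω‖ ^ 2 + 2 * ∑ i, ‖S.drift (r + 1) i ω‖ ^ 2 :=
    calc _ ≤ ∑ i, (2 * ‖Y i‖ ^ 2 + 2 * ‖S.drift (r + 1) i ω‖ ^ 2) :=
          Finset.sum_le_sum fun i _ => norm_add_sq_le_two_mul _ _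
      _ = 2 * ∑ i, ‖Y i‖ ^ 2 + 2 * ∑ i, ‖S.drift (r + 1) i ω‖ ^ 2 := by
          rw [Finset.sum_add_distrib, Finset.mul_sum, Finset.mul_sum]
      _ ≤ 2 * (4 * ∑ i, ‖S.momentumErr (r + 1) i ω‖ ^ 2) + 2 * ∑ i, ‖S.drift (r + 1) i ω‖ ^ 2 := by
          gcongr
          exact P.sum_norm_mix_sub_sq_le _
      _ = _ := by ring
  have hp0 := P.hp0
  calc ∑ i, ‖S.trackErr (r + 1) i ω‖ ^ 2
      = ∑ i, ‖∑ j, P.W j i • S.trackErr r j ω + (Y i + S.drift (r + 1) i ω)‖ ^ 2 := by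
        simp only [S.trackErr_succ, Y]
    _ ≤ (1 - P.p / 2) * ∑ i, ‖S.trackErr r i ω‖ ^ 2
          + 3 / P.p * ∑ i, ‖Y i + S.drift (r + 1) i ω‖ ^ 2 :=
        P.sum_norm_mix_add_sq_le (S.sum_trackErr_eq_zero r ω) _
    _ ≤ (1 - P.p / 2) * ∑ i, ‖S.trackErr r i ω‖ ^ 2
          + 3 / P.p * (8 * ∑ i, ‖S.momentumErr (r + 1) i ω‖ ^ 2
            + 2 * ∑ i, ‖S.drift (r + 1) i ω‖ ^ 2) := by
        gcongr
    _ = _ := by ring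

theorem sum_norm_drift_succ_sq_le (r : ℕ) (ω : Ω) :
    ∑ i, ‖S.drift (r + 1) i ω‖ ^ 2
      ≤ 2 * P.β ^ 2 / (1 + P.β ^ 2) * ∑ i, ‖S.drift r i ω‖ ^ 2
        + 2 / (1 - P.β ^ 2) * P.L ^ 2 * S.η ^ 2 * ∑ _i : Fin N, ‖S.ubar (r + 1) ω‖ ^ 2 := by
  have hβ : 0 ≤ 2 / (1 - P.β ^ 2) := div_nonneg zero_le_two (by nlinarith [P.hβ0, P.hβ1])
  have hstep : ‖S.xbar (r + 1) ω - S.xbar r ω‖ ^ 2 = S.η ^ 2 * ‖S.ubar (r + 1) ω‖ ^ 2 := by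
    rw [S.xbar_succ, sub_sub_cancel_left, norm_neg, norm_smul, mul_pow, Real.norm_eq_abs, sq_abs]
  calc ∑ i, ‖S.drift (r + 1) i ω‖ ^ 2
      ≤ ∑ i, (2 * P.β ^ 2 / (1 + P.β ^ 2) * ‖S.drift r i ω‖ ^ 2
          + 2 / (1 - P.β ^ 2) * ‖(P.g i (S.xbar (r + 1) ω) - P.gradF (S.xbar (r + 1) ω))
            - (P.g i (S.xbar r ω) - P.gradF (S.xbar r ω))‖ ^ 2) :=
        Finset.sum_le_sum fun i _ => by
          rw [S.drift_succ]
          exact norm_smul_add_sq_le P.hβ0 P.hβ1 _ _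
    _ ≤ 2 * P.β ^ 2 / (1 + P.β ^ 2) * ∑ i, ‖S.drift r i ω‖ ^ 2
          + 2 / (1 - P.β ^ 2) * (N * (P.L ^ 2 * ‖S.xbar (r + 1) ω - S.xbar r ω‖ ^ 2)) := by
        rw [Finset.sum_add_distrib, ← Finset.mul_sum, ← Finset.mul_sum]
        gcongr
        exact P.sum_norm_g_sub_gradF_sq_le _ _
    _ = _ := by
        rw [hstep, Finset.sum_const, Finset.card_univ, Fintype.card_fin, nsmul_eq_mul]
        ring

theorem Xi_eq_meanSq (r : ℕ) : S.Xi r = P.meanSq (S.consensusErr r) := rfl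

theorem EE_eq_meanSq (r : ℕ) : S.EE r = P.meanSq (S.trackErr r) := rfl

theorem DD_eq_meanSq (r : ℕ) : S.DD r = P.meanSq (S.drift r) := rfl

theorem Xi_succ_le (r : ℕ) :
    S.Xi (r + 1) ≤ (1 - P.p / 2) * S.Xi r + 9 / P.p * S.η ^ 2 * P.meanSq (S.momentumErr (r + 1))
      + 9 / P.p * S.η ^ 2 * S.EE r + 9 / P.p * S.η ^ 2 * P.meanSq (S.eseq (r + 1)) := by
  have h := P.meanSq_le ![1 - P.p / 2, 9 / P.p * S.η ^ 2, 9 / P.p * S.η ^ 2, 9 / P.p * S.η ^ 2]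
    ![S.consensusErr r, S.momentumErr (r + 1), S.trackErr r, S.eseq (r + 1)]
    (fun k i => by
      fin_cases k
      exacts [S.memLp_consensusErr r i, S.memLp_momentumErr _ i, S.memLp_trackErr r i,
        S.memLp_eseq _ i])
    (fun ω => by simpa [Fin.sum_univ_four] using S.sum_norm_consensusErr_succ_sq_le r ω)
  simpa [Fin.sum_univ_four, Xi_eq_meanSq, EE_eq_meanSq] using h

theorem EE_succ_le (r : ℕ) :
    S.EE (r + 1) ≤ (1 - P.p / 2) * S.EE r + 24 / P.p * P.meanSq (S.momentumErr (r + 1))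
      + 6 / P.p * S.DD (r + 1) := by
  have h := P.meanSq_le ![1 - P.p / 2, 24 / P.p, 6 / P.p]
    ![S.trackErr r, S.momentumErr (r + 1), S.drift (r + 1)]
    (fun k i => by
      fin_cases k
      exacts [S.memLp_trackErr r i, S.memLp_momentumErr _ i, S.memLp_drift _ i])
    (fun ω => by simpa [Fin.sum_univ_three] using S.sum_norm_trackErr_succ_sq_le r ω)
  simpa [Fin.sum_univ_three, EE_eq_meanSq, DD_eq_meanSq] using h

theorem DD_succ_le (r : ℕ) :
    S.DD (r + 1) ≤ 2 * P.β ^ 2 / (1 + P.β ^ 2) * S.DD r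
      + 2 / (1 - P.β ^ 2) * P.L ^ 2 * S.η ^ 2 * ∫ ω, ‖S.ubar (r + 1) ω‖ ^ 2 ∂P.μ := by
  have h := P.meanSq_le ![2 * P.β ^ 2 / (1 + P.β ^ 2), 2 / (1 - P.β ^ 2) * P.L ^ 2 * S.η ^ 2]
    ![S.drift r, fun _ => S.ubar (r + 1)]
    (fun k i => by
      fin_cases k
      exacts [S.memLp_drift r i, S.memLp_ubar _])
    (fun ω => by simpa using S.sum_norm_drift_succ_sq_le r ω)
  simpa [DD_eq_meanSq, P.meanSq_const] using h

theorem memLp_avg_G (r : ℕ) : MemLp (fun ω => (N : ℝ)⁻¹ • ∑ i, S.G r i ω) 2 P.μ :=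
  (memLp_finsetSum _ fun i _ => S.hmeas r i).const_smul (N : ℝ)⁻¹

theorem memLp_noise (r : ℕ) (i : Fin N) :
    MemLp (fun ω => S.G r i ω - P.g i (S.x r i ω)) 2 P.μ :=
  (S.hmeas r i).sub (P.memLp_g_comp i (S.memLp_x r i))

theorem integral_norm_ubar_succ_sq_le (r : ℕ) :
    ∫ ω, ‖S.ubar (r + 1) ω‖ ^ 2 ∂P.μ
      ≤ 2 * P.β ^ 2 * ∫ ω, ‖S.ubar r ω‖ ^ 2 ∂P.μ
        + 2 * ∫ ω, ‖(N : ℝ)⁻¹ • ∑ i, S.G r i ω‖ ^ 2 ∂P.μ := by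
  have hle : ∀ ω, ‖S.ubar (r + 1) ω‖ ^ 2
      ≤ 2 * P.β ^ 2 * ‖S.ubar r ω‖ ^ 2 + 2 * ‖(N : ℝ)⁻¹ • ∑ i, S.G r i ω‖ ^ 2 := fun ω => by
    have h := norm_add_sq_le_two_mul (P.β • S.ubar r ω) ((N : ℝ)⁻¹ • ∑ i, S.G r i ω)
    rwa [norm_smul, Real.norm_of_nonneg P.hβ0, mul_pow, ← mul_assoc, ← S.ubar_succ] at h
  simpa using integral_le_sum_mul_integral Finset.univ ![2 * P.β ^ 2, 2]
    ![fun ω => ‖S.ubar r ω‖ ^ 2, fun ω => ‖(N : ℝ)⁻¹ • ∑ i, S.G r i ω‖ ^ 2]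
    (fun ω => by positivity)
    (fun k _ => by
      fin_cases k
      exacts [(S.memLp_ubar r).integrable_norm_sq, (S.memLp_avg_G r).integrable_norm_sq])
    (fun ω => by simpa using hle ω)

theorem integral_norm_avg_noise_sq_le (r : ℕ) :
    ∫ ω, ‖(N : ℝ)⁻¹ • ∑ i, (S.G r i ω - P.g i (S.x r i ω))‖ ^ 2 ∂P.μ ≤ P.σ ^ 2 / N := by
  have hN : (0 : ℝ) < N := Nat.cast_pos.2 P.hN
  have horth := integral_norm_sum_sq_of_orthogonal Finset.univ (S.memLp_noise r)
    fun i j hij => S.horth r r i j (by simpa using hij)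
  simp only [norm_smul, mul_pow, Real.norm_of_nonneg (inv_nonneg.2 hN.le), integral_const_mul,
    horth]
  calc ((N : ℝ)⁻¹) ^ 2 * ∑ i, ∫ ω, ‖S.G r i ω - P.g i (S.x r i ω)‖ ^ 2 ∂P.μ
      ≤ ((N : ℝ)⁻¹) ^ 2 * ∑ _i : Fin N, P.σ ^ 2 := by
        gcongr with i
        exact S.hvar r i
    _ = P.σ ^ 2 / N := by
        simp only [Finset.sum_const, Finset.card_univ, Fintype.card_fin, nsmul_eq_mul]
        field_simp

theorem integral_norm_avg_G_sq_le (r : ℕ) :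
    ∫ ω, ‖(N : ℝ)⁻¹ • ∑ i, S.G r i ω‖ ^ 2 ∂P.μ
      ≤ 2 * (P.σ ^ 2 / N) + 4 * ∫ ω, ‖P.gradF (S.xbar r ω)‖ ^ 2 ∂P.μ + 4 * P.L ^ 2 * S.Xi r := by
  have hle : ∀ ω, ‖(N : ℝ)⁻¹ • ∑ i, S.G r i ω‖ ^ 2
      ≤ 2 * ‖(N : ℝ)⁻¹ • ∑ i, (S.G r i ω - P.g i (S.x r i ω))‖ ^ 2
        + 4 * ‖P.gradF (S.xbar r ω)‖ ^ 2
        + 4 * P.L ^ 2 * (N : ℝ)⁻¹ * ∑ i, ‖S.consensusErr r i ω‖ ^ 2 := fun ω => by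
    have hsplit : (N : ℝ)⁻¹ • ∑ i, S.G r i ω = (N : ℝ)⁻¹ • ∑ i, (S.G r i ω - P.g i (S.x r i ω))
        + (N : ℝ)⁻¹ • ∑ i, P.g i (S.x r i ω) := by
      rw [← smul_add, Finset.sum_sub_distrib, sub_add_cancel]
    have h : ‖(N : ℝ)⁻¹ • ∑ i, P.g i (S.x r i ω)‖ ^ 2 ≤ 2 * ‖P.gradF (S.xbar r ω)‖ ^ 2
        + 2 * P.L ^ 2 * ((N : ℝ)⁻¹ * ∑ i, ‖S.consensusErr r i ω‖ ^ 2) :=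
      P.norm_avg_g_sq_le (S.x r · ω) (S.xbar r ω)
    rw [hsplit]
    linarith [norm_add_sq_le_two_mul ((N : ℝ)⁻¹ • ∑ i, (S.G r i ω - P.g i (S.x r i ω)))
      ((N : ℝ)⁻¹ • ∑ i, P.g i (S.x r i ω))]
  have h := integral_le_sum_mul_integral Finset.univ ![2, 4, 4 * P.L ^ 2 * (N : ℝ)⁻¹]
    ![fun ω => ‖(N : ℝ)⁻¹ • ∑ i, (S.G r i ω - P.g i (S.x r i ω))‖ ^ 2,
      fun ω => ‖P.gradF (S.xbar r ω)‖ ^ 2, fun ω => ∑ i, ‖S.consensusErr r i ω‖ ^ 2]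
    (fun ω => sq_nonneg _)
    (fun k _ => by
      fin_cases k
      exacts [((memLp_finsetSum _ fun i _ => S.memLp_noise r i).const_smul
          (N : ℝ)⁻¹).integrable_norm_sq,
        (P.memLp_gradF_comp (S.memLp_xbar r)).integrable_norm_sq,
        integrable_finsetSum Finset.univ fun i _ => (S.memLp_consensusErr r i).integrable_norm_sq])
    (fun ω => by simpa [Fin.sum_univ_three] using hle ω)
  simp only [Fin.sum_univ_three, Matrix.cons_val_zero, Matrix.cons_val_one,
    Matrix.cons_val_two, Matrix.tail_cons, Matrix.head_cons] at h
  have hnoise := S.integral_norm_avg_noise_sq_le r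
  rw [Xi_eq_meanSq, MTProblem.meanSq]
  linarith

end MTRun

section Parameters

variable {β p t A : ℝ}

theorem four_le_of_eq_add_four (hβ0 : 0 ≤ β) (hβ1 : β < 1) (hp0 : 0 < p)
    (ht : t = 2 * β ^ 2 * p / (1 - β ^ 2) + 4) : 4 ≤ t := by
  have : 0 < 1 - β ^ 2 := by nlinarith
  rw [ht]
  have : 0 ≤ 2 * β ^ 2 * p / (1 - β ^ 2) := by positivity
  linarith

theorem one_sub_div_sub_pos_of_eq (hβ0 : 0 ≤ β) (hβ1 : β < 1) (hp0 : 0 < p) (hp1 : p ≤ 1)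
    (ht : t = 2 * β ^ 2 * p / (1 - β ^ 2) + 4) : 0 < 1 - p / t - 2 * β ^ 2 / (1 + β ^ 2) := by
  have hβ2 : 0 < 1 - β ^ 2 := by nlinarith
  have ht0 : 0 < t := by linarith [four_le_of_eq_add_four hβ0 hβ1 hp0 ht]
  have hmul : (1 - β ^ 2) * t = 2 * β ^ 2 * p + 4 * (1 - β ^ 2) := by
    rw [ht]
    field_simp
  -- after clearing denominators this is `p(1 − β²) < 4(1 − β²)`
  have hpt : p / t < (1 - β ^ 2) / (1 + β ^ 2) := by
    rw [div_lt_div_iff₀ ht0 (by positivity)]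
    nlinarith
  have : 1 - 2 * β ^ 2 / (1 + β ^ 2) = (1 - β ^ 2) / (1 + β ^ 2) := by
    field_simp
    ring
  linarith

theorem A_spec_of_eq (hβ0 : 0 ≤ β) (hβ1 : β < 1) (hp0 : 0 < p) (hp1 : p ≤ 1)
    (ht : t = 2 * β ^ 2 * p / (1 - β ^ 2) + 4)
    (hA : A = 648 / (1 - p / t - 2 * β ^ 2 / (1 + β ^ 2))) :
    648 ≤ A ∧ 1 - p / t = 648 / A + 2 * β ^ 2 / (1 + β ^ 2) := by
  have hgap := one_sub_div_sub_pos_of_eq hβ0 hβ1 hp0 hp1 ht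
  have hgap1 : 1 - p / t - 2 * β ^ 2 / (1 + β ^ 2) ≤ 1 := by
    have : 0 ≤ p / t := div_nonneg hp0.le (by linarith [four_le_of_eq_add_four hβ0 hβ1 hp0 ht])
    have : 0 ≤ 2 * β ^ 2 / (1 + β ^ 2) := by positivity
    linarith
  refine ⟨?_, ?_⟩
  · rw [hA, le_div_iff₀ hgap]
    linarith
  · rw [hA, div_div_cancel₀ (by norm_num : (648 : ℝ) ≠ 0)]
    ring

theorem mul_sq_le_sq_of_le_div_sqrt {L η K : ℝ} (hL : 0 < L) (hη : 0 < η) (hK : 0 < K)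
    (hstep : η ≤ p / (8 * L * Real.sqrt K)) : 64 * K * (L ^ 2 * η ^ 2) ≤ p ^ 2 := by
  have hsq := pow_le_pow_left₀ hη.le hstep 2
  rw [div_pow, mul_pow, mul_pow, Real.sq_sqrt hK.le, le_div_iff₀ (by positivity)] at hsq
  linarith

end Parameters

/- In the combination, `(216 + Aβ²)η²/p³` is the weight with which `𝒟^{(r+1)}` enters once
`ℰ^{(r+1)}` is eliminated, and `2L²η²/(1 − β²)` the one with which `E‖ū^{(r+1)}‖²` enters
`𝒟^{(r+1)}`. -/

section Coefficients

variable {p β L η A t : ℝ}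

theorem drift_weight_mul_le (hp : 0 < p) (hβ0 : 0 ≤ β) (hβ1 : β < 1) (hA : 648 ≤ A)
    (hstep : 64 * (324 + 2 * A * β ^ 2 / (1 - β ^ 2)) * (L ^ 2 * η ^ 2) ≤ p ^ 2) :
    8 * ((216 + A * β ^ 2) * η ^ 2 / p ^ 3) * (2 * L ^ 2 * η ^ 2 / (1 - β ^ 2)) ≤ η ^ 2 / p := by
  have hβ2 : 0 < 1 - β ^ 2 := by nlinarith
  have hK : 16 * (216 + A * β ^ 2) * (L ^ 2 * η ^ 2) ≤ p ^ 2 * (1 - β ^ 2) := by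
    have : 64 * (324 + 2 * A * β ^ 2 / (1 - β ^ 2)) * (1 - β ^ 2)
        = 64 * (324 * (1 - β ^ 2) + 2 * A * β ^ 2) := by field_simp
    nlinarith [mul_le_mul_of_nonneg_right hstep hβ2.le, mul_nonneg hβ2.le (sq_nonneg β),
      mul_nonneg (sub_nonneg.2 hA) (sq_nonneg β), mul_nonneg (sq_nonneg L) (sq_nonneg η)]
  calc _ = 16 * (216 + A * β ^ 2) * (L ^ 2 * η ^ 2) * (η ^ 2 / (p ^ 3 * (1 - β ^ 2))) := by
        field_simp
        ring
    _ ≤ p ^ 2 * (1 - β ^ 2) * (η ^ 2 / (p ^ 3 * (1 - β ^ 2))) := by gcongr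
    _ = η ^ 2 / p := by field_simp

theorem consensus_coef_le (hp : 0 < p) (ht : 4 ≤ t) (hβ0 : 0 ≤ β) (hβ1 : β < 1)
    (hA : 648 ≤ A) (hstep : 64 * (324 + 2 * A * β ^ 2 / (1 - β ^ 2)) * (L ^ 2 * η ^ 2) ≤ p ^ 2) :
    1 - p / 2 + 8 * ((216 + A * β ^ 2) * η ^ 2 / p ^ 3) * (2 * L ^ 2 * η ^ 2 / (1 - β ^ 2)) * L ^ 2
      ≤ 1 - p / t := by
  have h1 : p / t ≤ p / 4 := div_le_div_of_nonneg_left hp.le (by norm_num) ht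
  have h2 := mul_le_mul_of_nonneg_right (drift_weight_mul_le hp hβ0 hβ1 hA hstep) (sq_nonneg L)
  have h3 : η ^ 2 / p * L ^ 2 ≤ p / 64 := by
    rw [div_mul_eq_mul_div, div_le_div_iff₀ hp (by norm_num)]
    have : 0 ≤ 2 * A * β ^ 2 / (1 - β ^ 2) := div_nonneg (by positivity) (by nlinarith)
    nlinarith [mul_nonneg (sq_nonneg L) (sq_nonneg η)]
  linarith

theorem tracking_coef_le (hp : 0 < p) (ht : 4 ≤ t) :
    9 / p * η ^ 2 + 36 / p ^ 2 * η ^ 2 * (1 - p / 2) ≤ (1 - p / t) * (36 / p ^ 2 * η ^ 2) := by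
  have : (1 - p / t) * (36 / p ^ 2 * η ^ 2) - (9 / p * η ^ 2 + 36 / p ^ 2 * η ^ 2 * (1 - p / 2))
      = 9 * η ^ 2 * (t - 4) / (p * t) := by
    field_simp
    ring
  have : 0 ≤ t - 4 := by linarith
  have : 0 ≤ 9 * η ^ 2 * (t - 4) / (p * t) := by positivity
  linarith

theorem drift_coef_le (hp : 0 < p) (hA : 0 < A)
    (hAt : 1 - p / t = 648 / A + 2 * β ^ 2 / (1 + β ^ 2)) :
    (216 + A * β ^ 2) * η ^ 2 / p ^ 3 * (2 * β ^ 2 / (1 + β ^ 2))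
      ≤ (1 - p / t) * (A * β ^ 2 / p ^ 3 * η ^ 2) := by
  have : (648 / A + 2 * β ^ 2 / (1 + β ^ 2)) * (A * β ^ 2 / p ^ 3 * η ^ 2)
      - (216 + A * β ^ 2) * η ^ 2 / p ^ 3 * (2 * β ^ 2 / (1 + β ^ 2))
      = β ^ 2 * η ^ 2 / (p ^ 3 * (1 + β ^ 2)) * (216 + 648 * β ^ 2) := by
    field_simp
    ring
  have : 0 ≤ β ^ 2 * η ^ 2 / (p ^ 3 * (1 + β ^ 2)) * (216 + 648 * β ^ 2) := by positivity
  rw [hAt]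
  linarith

theorem momentum_coef_le (hp : 0 < p) (hβ0 : 0 ≤ β) (hβ1 : β < 1) (hA : 648 ≤ A) :
    (216 + A * β ^ 2) * η ^ 2 / p ^ 3 * (2 * L ^ 2 * η ^ 2 / (1 - β ^ 2)) * (2 * β ^ 2)
      ≤ L ^ 2 / p ^ 3 * (2592 * β ^ 2 + 16 * A * β ^ 4 / (1 - β ^ 2)) * η ^ 4 := by
  have hβ2 : 0 < 1 - β ^ 2 := by nlinarith
  have : L ^ 2 / p ^ 3 * (2592 * β ^ 2 + 16 * A * β ^ 4 / (1 - β ^ 2)) * η ^ 4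
      - (216 + A * β ^ 2) * η ^ 2 / p ^ 3 * (2 * L ^ 2 * η ^ 2 / (1 - β ^ 2)) * (2 * β ^ 2)
      = L ^ 2 * η ^ 4 * β ^ 2 / (p ^ 3 * (1 - β ^ 2)) * (1728 + (12 * A - 2592) * β ^ 2) := by
    field_simp
    ring
  have : 0 ≤ L ^ 2 * η ^ 4 * β ^ 2 / (p ^ 3 * (1 - β ^ 2)) * (1728 + (12 * A - 2592) * β ^ 2) :=
    mul_nonneg (by positivity) (by nlinarith [sq_nonneg β])
  linarith

end Coefficients

theorem lyapunov_combination {p β L η σ t A n ξ₀ ξ₁ ε₀ ε₁ δ₀ δ₁ v₀ v₁ s γ m e : ℝ}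
    (hp : 0 < p) (hβ0 : 0 ≤ β) (hβ1 : β < 1) (hn : 1 ≤ n)
    (ht : 4 ≤ t) (hA : 648 ≤ A) (hAt : 1 - p / t = 648 / A + 2 * β ^ 2 / (1 + β ^ 2))
    (hstep : 64 * (324 + 2 * A * β ^ 2 / (1 - β ^ 2)) * (L ^ 2 * η ^ 2) ≤ p ^ 2)
    (hξ₀ : 0 ≤ ξ₀) (hε₀ : 0 ≤ ε₀) (hδ₀ : 0 ≤ δ₀) (hv₀ : 0 ≤ v₀) (hγ : 0 ≤ γ)
    (hξ : ξ₁ ≤ (1 - p / 2) * ξ₀ + 9 / p * η ^ 2 * m + 9 / p * η ^ 2 * ε₀ + 9 / p * η ^ 2 * e)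
    (hε : ε₁ ≤ (1 - p / 2) * ε₀ + 24 / p * m + 6 / p * δ₁)
    (hδ : δ₁ ≤ 2 * β ^ 2 / (1 + β ^ 2) * δ₀ + 2 / (1 - β ^ 2) * L ^ 2 * η ^ 2 * v₁)
    (hv : v₁ ≤ 2 * β ^ 2 * v₀ + 2 * s)
    (hs : s ≤ 2 * (σ ^ 2 / n) + 4 * γ + 4 * L ^ 2 * ξ₀) :
    ξ₁ + 36 / p ^ 2 * η ^ 2 * ε₁ + A * β ^ 2 / p ^ 3 * η ^ 2 * δ₁ ≤
      (1 - p / t) * (ξ₀ + 36 / p ^ 2 * η ^ 2 * ε₀ + A * β ^ 2 / p ^ 3 * η ^ 2 * δ₀)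
        + 1 / p * η ^ 2 * γ + (9 + 864 / p ^ 2) / p * η ^ 2 * m
        + L ^ 2 / p ^ 3 * (2592 * β ^ 2 + 16 * A * β ^ 4 / (1 - β ^ 2)) * η ^ 4 * v₀
        + 9 / p * η ^ 2 * e + σ ^ 2 * η ^ 2 / p := by
  have hβ2 : 0 < 1 - β ^ 2 := by nlinarith
  have hA0 : 0 < A := by linarith
  have hweight := drift_weight_mul_le hp hβ0 hβ1 hA hstep
  have hσ : σ ^ 2 / n ≤ σ ^ 2 := div_le_self (sq_nonneg σ) hn
  linear_combination hξ + 36 / p ^ 2 * η ^ 2 * hε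
    + (216 + A * β ^ 2) * η ^ 2 / p ^ 3 * hδ
    + (216 + A * β ^ 2) * η ^ 2 / p ^ 3 * (2 * L ^ 2 * η ^ 2 / (1 - β ^ 2)) * hv
    + 2 * ((216 + A * β ^ 2) * η ^ 2 / p ^ 3) * (2 * L ^ 2 * η ^ 2 / (1 - β ^ 2)) * hs
    + ξ₀ * consensus_coef_le hp ht hβ0 hβ1 hA hstep
    + ε₀ * tracking_coef_le (η := η) hp ht
    + δ₀ * drift_coef_le (η := η) hp hA0 hAt
    + v₀ * momentum_coef_le (L := L) (η := η) hp hβ0 hβ1 hA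
    + γ * hweight
    + σ ^ 2 / 2 * hweight
    + 4 * ((216 + A * β ^ 2) * η ^ 2 / p ^ 3) * (2 * L ^ 2 * η ^ 2 / (1 - β ^ 2)) * hσ
    + (by positivity : 0 ≤ σ ^ 2 * η ^ 2 / (2 * p))

/-- **Lemma** (joint recursion for `Ξ`, `ℰ`, `𝒟`): with `t = 2β²p/(1−β²) + 4` and
`A = 648/(1 − p/t − 2β²/(1+β²))`, if `η ≤ p/(8L√(324 + 2Aβ²/(1−β²)))`, then for every
`r ≥ 0` the stated joint contraction inequality holds. -/
theorem joint_recursion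
    (N d : ℕ) (Ω : Type) [mΩ : MeasurableSpace Ω]
    (P : MTProblem N d Ω) (S : MTRun P) (t A : ℝ)
    (ht : t = 2 * P.β ^ 2 * P.p / (1 - P.β ^ 2) + 4)
    (hA : A = 648 / (1 - P.p / t - 2 * P.β ^ 2 / (1 + P.β ^ 2)))
    (hstep : S.η ≤ P.p / (8 * P.L * Real.sqrt (324 + 2 * A * P.β ^ 2 / (1 - P.β ^ 2)))) :
    ∀ r : ℕ,
      S.Xi (r + 1) + 36 / P.p ^ 2 * S.η ^ 2 * S.EE (r + 1)
          + A * P.β ^ 2 / P.p ^ 3 * S.η ^ 2 * S.DD (r + 1) ≤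
        (1 - P.p / t) *
            (S.Xi r + 36 / P.p ^ 2 * S.η ^ 2 * S.EE r
              + A * P.β ^ 2 / P.p ^ 3 * S.η ^ 2 * S.DD r)
          + 1 / P.p * S.η ^ 2 * ∫ ω, ‖P.gradF (S.xbar r ω)‖ ^ 2 ∂P.μ
          + 1 / ((N : ℝ) * P.p) * (9 + 864 / P.p ^ 2) * S.η ^ 2 *
              ∫ ω, (∑ i, ‖S.u (r + 1) i ω - S.dseq (r + 1) i ω‖ ^ 2) ∂P.μ
          + P.L ^ 2 / P.p ^ 3 * (2592 * P.β ^ 2 + 16 * A * P.β ^ 4 / (1 - P.β ^ 2)) *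
              S.η ^ 4 * ∫ ω, ‖S.ubar r ω‖ ^ 2 ∂P.μ
          + 9 / ((N : ℝ) * P.p) * S.η ^ 2 * ∫ ω, (∑ i, ‖S.eseq (r + 1) i ω‖ ^ 2) ∂P.μ
          + P.σ ^ 2 * S.η ^ 2 / P.p := by
  intro r
  have hβ2 : 0 < 1 - P.β ^ 2 := by nlinarith [P.hβ0, P.hβ1]
  obtain ⟨hA648, hAt⟩ := A_spec_of_eq P.hβ0 P.hβ1 P.hp0 P.hp1 ht hA
  have hA0 : 0 ≤ A := by linarith
  have key := lyapunov_combination (ξ₀ := S.Xi r) (ε₀ := S.EE r) (δ₀ := S.DD r)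
    P.hp0 P.hβ0 P.hβ1 (Nat.one_le_cast.2 P.hN)
    (four_le_of_eq_add_four P.hβ0 P.hβ1 P.hp0 ht) hA648 hAt
    (mul_sq_le_sq_of_le_div_sqrt P.hL S.hη (by positivity) hstep)
    (P.meanSq_nonneg _) (P.meanSq_nonneg _) (P.meanSq_nonneg _) (by positivity) (by positivity)
    (S.Xi_succ_le r) (S.EE_succ_le r) (S.DD_succ_le r) (S.integral_norm_ubar_succ_sq_le r)
    (S.integral_norm_avg_G_sq_le r)
  simp only [MTProblem.meanSq, MTRun.momentumErr] at key
  linear_combination key
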